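/- Let α, β ∈ Hom_{S^e}(S^e⊗Λ²V, S⋊G)^G be G-invariant 2-cochains on the Koszul resolution of S = S_q(V). Then the circle product computed via the chain maps φ and ψ satisfies, for all distinct i,j,k: (α∘β)(v_i∧v_j∧v_k) = ψ*(α)( β(v_i∧v_j)⊗v_k − q_{ik}q_{jk} v_k⊗β(v_i∧v_j) ) + q_{ij}q_{ik} ψ*(α)( β(v_j∧v_k)⊗v_i − q_{ji}q_{ki} v_i⊗β(v_j∧v_k) ) + q_{ik}q_{jk} ψ*(α)( β(v_k∧v_i)⊗v_j − q_{ij}q_{kj} v_j⊗β(v_k∧v_i) ). -/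
import Mathlib


open scoped BigOperators

noncomputable section

namespace QDOA18

/-- The vector `ᵍvᵢ ∈ V = Fin n → k`. -/
def gv (k : Type*) [Field k] (n : ℕ) {G : Type*} (rho : G → Fin n → Fin n → k)
    (g : G) (i : Fin n) : Fin n → k := fun m => rho g m i

/-- The standard basis vector `vᵢ` of `V = Fin n → k`. -/
def ev (k : Type*) [Field k] (n : ℕ) (i : Fin n) : Fin n → k := Pi.single i 1

/-- The linear action of `h ∈ G` on a vector `x ∈ V`. -/
def act (k : Type*) [Field k] (n : ℕ) {G : Type*} (rho : G → Fin n → Fin n → k)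
    (h : G) (x : Fin n → k) : Fin n → k := fun m => ∑ l, rho h m l * x l

/-- The bilinear extension of the `g`-component of a 2-cochain `α` with values in
`(k ⊕ V) ⊗ kG` (given componentwise by `aC`, `aL`) to a pair of vectors; the
value lies in `k ⊕ V = k × (Fin n → k)`. -/
def cochainBil (k : Type*) [Field k] (n : ℕ) {G : Type*}
    (aC : Fin n → Fin n → G → k) (aL : Fin n → Fin n → G → Fin n → k)
    (g : G) (x y : Fin n → k) : k × (Fin n → k) :=
  (∑ a, ∑ b, x a * y b * aC a b g, fun t => ∑ a, ∑ b, x a * y b * aL a b g t)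

/-- The full value `β(vₐ∧v_b) ∈ (k ⊕ V) ⊗ kG` of a 2-cochain, recorded as a
function `G → k × (Fin n → k)`. -/
def cochainVal (k : Type*) [Field k] (n : ℕ) {G : Type*}
    (bC : Fin n → Fin n → G → k) (bL : Fin n → Fin n → G → Fin n → k)
    (a b : Fin n) : G → k × (Fin n → k) :=
  fun h => (bC a b h, fun l => bL a b h l)

/-- `ψ*(β)(vₐ ⊗ v_b) = β(ψ₂(1⊗vₐ⊗v_b⊗1)) = ½ β(vₐ∧v_b)` for `a ≠ b` and `0`
for `a = b`. -/
def psiVal (k : Type*) [Field k] (n : ℕ) {G : Type*}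
    (bC : Fin n → Fin n → G → k) (bL : Fin n → Fin n → G → Fin n → k)
    (a b : Fin n) : G → k × (Fin n → k) :=
  fun h => if a = b then 0 else (2⁻¹ : k) • (bC a b h, fun l => bL a b h l)

/-- The evaluation `ψ*(α)(x ⊗ v_c)` for `x = ∑_h x_h # h ∈ (k ⊕ V) ⊗ kG` and a
basis vector `v_c`, using the extension `μ(r#g, s#h) = μ(r, ᵍs)(gh)` of cochains
to the skew group algebra and the (normalized) chain map `ψ`:  only the
`V`-component of `x_h` contributes, and the `g`-component of the result is
`∑_h ½ α_{gh⁻¹}((x_h)_V, ʰv_c)`. -/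
def psiA (k : Type*) [Field k] (n : ℕ) {G : Type*} [Group G] [Fintype G]
    (rho : G → Fin n → Fin n → k)
    (aC : Fin n → Fin n → G → k) (aL : Fin n → Fin n → G → Fin n → k)
    (x : G → k × (Fin n → k)) (c : Fin n) : G → k × (Fin n → k) :=
  fun g => ∑ h : G, (2⁻¹ : k) • cochainBil k n aC aL (g * h⁻¹) ((x h).2) (gv k n rho h c)

/-- The evaluation `ψ*(α)(v_c ⊗ x)`:  the `g`-component is
`∑_h ½ α_{gh⁻¹}(v_c, (x_h)_V)`. -/
def psiB (k : Type*) [Field k] (n : ℕ) {G : Type*} [Group G] [Fintype G]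
    (aC : Fin n → Fin n → G → k) (aL : Fin n → Fin n → G → Fin n → k)
    (c : Fin n) (x : G → k × (Fin n → k)) : G → k × (Fin n → k) :=
  fun g => ∑ h : G, (2⁻¹ : k) • cochainBil k n aC aL (g * h⁻¹) (ev k n c) ((x h).2)

/-- The circle product `(α∘β)(vᵢ∧vⱼ∧vₖ) = (ψ*(α)∘ψ*(β))(φ₃(vᵢ∧vⱼ∧vₖ))`, computed
from the expansion of `φ₃` and the definition
`(α∘β)(r₁⊗r₂⊗r₃) = α(β(r₁⊗r₂)⊗r₃) − α(r₁⊗β(r₂⊗r₃))`. -/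
def circleProd (k : Type*) [Field k] (n : ℕ) {G : Type*} [Group G] [Fintype G]
    (q : Fin n → Fin n → k) (rho : G → Fin n → Fin n → k)
    (aC : Fin n → Fin n → G → k) (aL : Fin n → Fin n → G → Fin n → k)
    (bC : Fin n → Fin n → G → k) (bL : Fin n → Fin n → G → Fin n → k)
    (i j m : Fin n) : G → k × (Fin n → k) :=
  (psiA k n rho aC aL (psiVal k n bC bL i j) m - psiB k n aC aL i (psiVal k n bC bL j m))
  - q i j • (psiA k n rho aC aL (psiVal k n bC bL j i) m
      - psiB k n aC aL j (psiVal k n bC bL i m))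
  - q j m • (psiA k n rho aC aL (psiVal k n bC bL i m) j
      - psiB k n aC aL i (psiVal k n bC bL m j))
  - (q i j * q i m * q j m) • (psiA k n rho aC aL (psiVal k n bC bL m j) i
      - psiB k n aC aL m (psiVal k n bC bL j i))
  + (q i j * q i m) • (psiA k n rho aC aL (psiVal k n bC bL j m) i
      - psiB k n aC aL j (psiVal k n bC bL m i))
  + (q i m * q j m) • (psiA k n rho aC aL (psiVal k n bC bL m i) j
      - psiB k n aC aL m (psiVal k n bC bL i j))

/-- For `G`-invariant 2-cochains `α, β` on the Koszul
resolution of `S_q(V)` (with values in `S_q(V) ⋊ G`), the circle product computed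
via the chain maps `φ` and `ψ` satisfies, for all distinct `i, j, k`:
`(α∘β)(vᵢ∧vⱼ∧vₖ) = ψ*(α)(β(vᵢ∧vⱼ)⊗vₖ − q_{ik}q_{jk} vₖ⊗β(vᵢ∧vⱼ))
 + q_{ij}q_{ik} ψ*(α)(β(vⱼ∧vₖ)⊗vᵢ − q_{ji}q_{ki} vᵢ⊗β(vⱼ∧vₖ))
 + q_{ik}q_{jk} ψ*(α)(β(vₖ∧vᵢ)⊗vⱼ − q_{ij}q_{kj} vⱼ⊗β(vₖ∧vᵢ))`. -/
theorem circle_product_formula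
    (k : Type*) [Field k] [CharZero k] (n : ℕ) (G : Type*) [Group G] [Fintype G]
    (q : Fin n → Fin n → k) (rho : G → Fin n → Fin n → k)
    (aC : Fin n → Fin n → G → k) (aL : Fin n → Fin n → G → Fin n → k)
    (bC : Fin n → Fin n → G → k) (bL : Fin n → Fin n → G → Fin n → k)
    (hq_diag : ∀ i, q i i = 1)
    (hq_inv : ∀ i j, q i j * q j i = 1)
    (hrho_one : ∀ i j, rho 1 i j = if i = j then 1 else 0)
    (hrho_mul : ∀ g h i j, rho (g * h) i j = ∑ l, rho g i l * rho h l j)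
    (haC_antisym : ∀ i j g, aC i j g = -(q i j) * aC j i g)
    (haL_antisym : ∀ i j g l, aL i j g l = -(q i j) * aL j i g l)
    (hbC_antisym : ∀ i j g, bC i j g = -(q i j) * bC j i g)
    (hbL_antisym : ∀ i j g l, bL i j g l = -(q i j) * bL j i g l)
    (ha_G_inv : ∀ (h g : G) (x y : Fin n → k),
      ((cochainBil k n aC aL (h⁻¹ * g * h) x y).1,
        act k n rho h (cochainBil k n aC aL (h⁻¹ * g * h) x y).2) =
      cochainBil k n aC aL g (act k n rho h x) (act k n rho h y))
    (hb_G_inv : ∀ (h g : G) (x y : Fin n → k),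
      ((cochainBil k n bC bL (h⁻¹ * g * h) x y).1,
        act k n rho h (cochainBil k n bC bL (h⁻¹ * g * h) x y).2) =
      cochainBil k n bC bL g (act k n rho h x) (act k n rho h y)) :
    ∀ i j m : Fin n, i ≠ j → i ≠ m → j ≠ m →
      circleProd k n q rho aC aL bC bL i j m =
        (psiA k n rho aC aL (cochainVal k n bC bL i j) m
            - (q i m * q j m) • psiB k n aC aL m (cochainVal k n bC bL i j))
        + (q i j * q i m) • (psiA k n rho aC aL (cochainVal k n bC bL j m) i
            - (q j i * q m i) • psiB k n aC aL i (cochainVal k n bC bL j m))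
        + (q i m * q j m) • (psiA k n rho aC aL (cochainVal k n bC bL m i) j
            - (q i j * q m j) • psiB k n aC aL j (cochainVal k n bC bL m i)) := by
  -- Auxiliary linearity facts
  have cochainBil_smul : ∀ (cC : Fin n → Fin n → G → k)
      (cL : Fin n → Fin n → G → Fin n → k) (g : G) (c : k) (y z : Fin n → k),
      cochainBil k n cC cL g (c • y) z = c • cochainBil k n cC cL g y z := by
    intro cC cL g c y z
    unfold cochainBil
    refine Prod.ext ?_ ?_
    · simp [Finset.mul_sum, mul_assoc]
    · funext t
      simp [Finset.mul_sum, mul_assoc]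
  have cochainBil_smul' : ∀ (cC : Fin n → Fin n → G → k)
      (cL : Fin n → Fin n → G → Fin n → k) (g : G) (c : k) (y z : Fin n → k),
      cochainBil k n cC cL g y (c • z) = c • cochainBil k n cC cL g y z := by
    intro cC cL g c y z
    unfold cochainBil
    refine Prod.ext ?_ ?_
    · simp [Finset.mul_sum]
      exact Finset.sum_congr rfl fun a _ => Finset.sum_congr rfl fun b _ => by ring
    · funext t
      simp [Finset.mul_sum]
      exact Finset.sum_congr rfl fun a _ => Finset.sum_congr rfl fun b _ => by ring
  have psiA_smul : ∀ (x : G → k × (Fin n → k)) (c : k) (d : Fin n),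
      psiA k n rho aC aL (c • x) d = c • psiA k n rho aC aL x d := by
    intro x c d
    funext g
    simp only [psiA, Pi.smul_apply, Prod.smul_snd, cochainBil_smul, Finset.smul_sum]
    exact Finset.sum_congr rfl (fun h _ => smul_comm _ _ _)
  have psiB_smul : ∀ (x : G → k × (Fin n → k)) (c : k) (d : Fin n),
      psiB k n aC aL d (c • x) = c • psiB k n aC aL d x := by
    intro x c d
    funext g
    simp only [psiB, Pi.smul_apply, Prod.smul_snd, cochainBil_smul', Finset.smul_sum]
    exact Finset.sum_congr rfl (fun h _ => smul_comm _ _ _)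
  have psiVal_eq : ∀ a b : Fin n, a ≠ b →
      psiVal k n bC bL a b = (2⁻¹ : k) • cochainVal k n bC bL a b := by
    intro a b hab
    funext h
    simp [psiVal, cochainVal, hab]
  have swap : ∀ a b : Fin n,
      cochainVal k n bC bL b a = (-(q b a)) • cochainVal k n bC bL a b := by
    intro a b
    funext h
    refine Prod.ext ?_ ?_
    · simpa [cochainVal] using hbC_antisym b a h
    · funext l
      simpa [cochainVal] using hbL_antisym b a h l
  intro i j m hij him hjm
  have hji : q j i = (q i j)⁻¹ := eq_inv_of_mul_eq_one_left (hq_inv j i)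
  have hmi : q m i = (q i m)⁻¹ := eq_inv_of_mul_eq_one_left (hq_inv m i)
  have hmj : q m j = (q j m)⁻¹ := eq_inv_of_mul_eq_one_left (hq_inv m j)
  have hij0 : q i j ≠ 0 := left_ne_zero_of_mul_eq_one (hq_inv i j)
  have him0 : q i m ≠ 0 := left_ne_zero_of_mul_eq_one (hq_inv i m)
  have hjm0 : q j m ≠ 0 := left_ne_zero_of_mul_eq_one (hq_inv j m)
  have h2 : (2 : k) ≠ 0 := two_ne_zero
  unfold circleProd
  rw [psiVal_eq i j hij, psiVal_eq j m hjm, psiVal_eq m i (Ne.symm him),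
    psiVal_eq j i (Ne.symm hij), psiVal_eq m j (Ne.symm hjm), psiVal_eq i m him,
    swap i j, swap j m, swap m i]
  simp only [smul_smul, psiA_smul, psiB_smul]
  rw [hji, hmi, hmj]
  match_scalars <;> field_simp <;> ring

end QDOA18
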